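/- Let (t_{s,j}) be a solution of the system (dist)–(ne2), with the endpoints U_{s,j}, L_{s,j} defined by the stated recursion. Then for every state j ∈ {1,…,n} and indices s, k ∈ {1,…,d}: if t_{s,j} > 0 and t_{k,j} > 0, then U_{s,j} = U_{k,j}. -/

import Mathlib

/-- Probability of at least `m` successes in `l-1` Bernoulli(x) trials. -/
noncomputable def w (l m : ℕ) (x : ℝ) : ℝ :=
  ∑ i ∈ Finset.Icc m (l - 1), ((l - 1).choose i : ℝ) * x ^ i * (1 - x) ^ (l - 1 - i)

/-- `W x = 1 - w x`. -/
noncomputable def W (l m : ℕ) (x : ℝ) : ℝ := 1 - w l m x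

/-- `γ_{s,j} = ∑_{k=j}^n t_{s,k} q_k`. -/
noncomputable def gam (n : ℕ) (q : ℕ → ℝ) (t : ℕ → ℕ → ℝ) (s j : ℕ) : ℝ :=
  ∑ k ∈ Finset.Icc j n, t s k * q k

/-- `(t_{s,j})` is a solution of the system (dist)–(ne2). -/
def IsSolution (l m d n : ℕ) (M q : ℕ → ℝ) (t : ℕ → ℕ → ℝ) : Prop :=
  (∀ s ∈ Finset.Icc 1 d, ∀ j ∈ Finset.Icc 1 n, 0 ≤ t s j) ∧
  ∀ j ∈ Finset.Icc 1 n,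
    (∑ s ∈ Finset.Icc 1 d, t s j) = 1 ∧
    ∃ dj ∈ Finset.Icc 1 d,
      (∀ s ∈ Finset.Icc 1 d, s ≤ dj → 0 < t s j) ∧
      (∀ s ∈ Finset.Icc 1 d, dj < s → t s j = 0) ∧
      (∀ s ∈ Finset.Icc 1 dj,
        M s * W l m (gam n q t s j) = M 1 * W l m (gam n q t 1 j)) ∧
      (∀ s, dj ≤ s → s < d →
        M (s + 1) * W l m (gam n q t (s + 1) j) ≤ M s * W l m (gam n q t s j))

/-! By induction on the stage `j`. An arm active at stage `j + 1` is already active at stage `j`: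
otherwise its `γ` is the same at both stages, while arm 1, always active, strictly lowers its `γ`
and so strictly raises the common value `M₁ W(γ₁)`, because `W` is strictly decreasing on `[0, 1]`
(the derivative of `w` is a positive multiple of a Bernstein polynomial); this contradicts
`M_s W(γ_s) ≤ M₁ W(γ₁)` at stage `j`. For an arm active at both stages, multiplying the recursion
by `M_s` turns it into `(f_j(L_s) - c) A_{j+1} = (f_j(U_s) - c) A_j` with the common values `A`,
which do not depend on `s`; so equal `U`'s give equal `L`'s, as `f_j` is injective. -/

open Finset Polynomial

theorem derivative_sum_Icc_bernsteinPolynomial (R : Type*) [CommRing R] {m N : ℕ}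
    (hm : 1 ≤ m) (hmN : m ≤ N) :
    derivative (∑ i ∈ Icc m N, bernsteinPolynomial R N i) =
      N * bernsteinPolynomial R (N - 1) (m - 1) := by
  have hderiv : ∀ i ∈ Icc m N, derivative (bernsteinPolynomial R N i) =
      -(N * (bernsteinPolynomial R (N - 1) (i + 1 - 1) - bernsteinPolynomial R (N - 1) (i - 1))) := by
    intro i hi
    obtain ⟨ν, rfl⟩ : ∃ ν, i = ν + 1 := ⟨i - 1, by grind⟩
    rw [bernsteinPolynomial.derivative_succ, Nat.add_sub_cancel, Nat.add_sub_cancel]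
    ring
  rw [derivative_sum, sum_congr rfl hderiv, sum_neg_distrib, ← mul_sum,
    sum_Icc_sub hmN (fun i => bernsteinPolynomial R (N - 1) (i - 1)), Nat.add_sub_cancel,
    bernsteinPolynomial.eq_zero_of_lt R (by omega : N - 1 < N)]
  ring

theorem w_eq_eval_sum_bernsteinPolynomial (l m : ℕ) (x : ℝ) :
    w l m x = (∑ i ∈ Icc m (l - 1), bernsteinPolynomial ℝ (l - 1) i).eval x := by
  simp [w, bernsteinPolynomial, eval_finsetSum]

theorem w_strictMonoOn {l m : ℕ} (hm : 1 ≤ m) (hml : m ≤ l - 1) :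
    StrictMonoOn (w l m) (Set.Icc 0 1) := by
  set p := ∑ i ∈ Icc m (l - 1), bernsteinPolynomial ℝ (l - 1) i
  have hw : w l m = fun x => p.eval x := funext (w_eq_eval_sum_bernsteinPolynomial l m)
  rw [hw]
  refine strictMonoOn_of_deriv_pos (convex_Icc 0 1) p.continuous.continuousOn fun x hx => ?_
  rw [interior_Icc] at hx
  rw [(p.hasDerivAt x).deriv, derivative_sum_Icc_bernsteinPolynomial ℝ hm hml]
  have hchoose : 0 < ((l - 1 - 1).choose (m - 1) : ℝ) := by
    exact_mod_cast Nat.choose_pos (by omega)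
  have hN : (0 : ℝ) < (l - 1 : ℕ) := by exact_mod_cast (by omega : 0 < l - 1)
  have hx1 : 0 < 1 - x := sub_pos.mpr hx.2
  have hx0 := hx.1
  simp only [bernsteinPolynomial, eval_mul, eval_natCast, eval_pow, eval_sub, eval_one, eval_X]
  positivity

theorem W_one {l m : ℕ} (hml : m ≤ l - 1) : W l m 1 = 0 := by
  rw [W, w_eq_eval_sum_bernsteinPolynomial, eval_finsetSum]
  simp [bernsteinPolynomial.eval_at_1, hml]

theorem W_strictAntiOn {l m : ℕ} (hm : 1 ≤ m) (hml : m ≤ l - 1) :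
    StrictAntiOn (W l m) (Set.Icc 0 1) := fun _ hx _ hy hxy => by
  simpa [W] using w_strictMonoOn hm hml hx hy hxy

theorem W_pos {l m : ℕ} (hm : 1 ≤ m) (hml : m ≤ l - 1) {x : ℝ} (hx : x ∈ Set.Ico 0 1) :
    0 < W l m x :=
  W_one hml ▸ W_strictAntiOn hm hml (Set.Ico_subset_Icc_self hx) ⟨zero_le_one, le_rfl⟩ hx.2

theorem gam_eq_add (n : ℕ) (q : ℕ → ℝ) (t : ℕ → ℕ → ℝ) (s : ℕ) {j : ℕ} (hjn : j ≤ n) :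
    gam n q t s j = t s j * q j + gam n q t s (j + 1) := by
  rw [gam, gam, ← add_sum_Ioc_eq_sum_Icc hjn, Icc_add_one_left_eq_Ioc]

namespace IsSolution

variable {l m d n : ℕ} {M q : ℕ → ℝ} {t : ℕ → ℕ → ℝ} {s j : ℕ}

theorem le_one (hsol : IsSolution l m d n M q t) (hs : s ∈ Icc 1 d) (hj : j ∈ Icc 1 n) :
    t s j ≤ 1 :=
  (hsol.2 j hj).1 ▸ single_le_sum (fun r hr => hsol.1 r hr j hj) hs

theorem gam_mem_Ico (hsol : IsSolution l m d n M q t) (hq : ∀ j ∈ Icc 1 n, 0 ≤ q j)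
    (hqsum : ∑ j ∈ Icc 1 n, q j < 1) (hs : s ∈ Icc 1 d) (hj : 1 ≤ j) :
    gam n q t s j ∈ Set.Ico 0 1 := by
  refine ⟨sum_nonneg fun k hk => ?_, ?_⟩
  · have hk : k ∈ Icc 1 n := Icc_subset_Icc_left hj hk
    exact mul_nonneg (hsol.1 s hs k hk) (hq k hk)
  calc gam n q t s j ≤ ∑ k ∈ Icc j n, q k := sum_le_sum fun k hk => by
        have hk : k ∈ Icc 1 n := Icc_subset_Icc_left hj hk
        exact mul_le_of_le_one_left (hq k hk) (hsol.le_one hs hk)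
    _ ≤ ∑ k ∈ Icc 1 n, q k :=
        sum_le_sum_of_subset_of_nonneg (Icc_subset_Icc_left hj) fun k hk _ => hq k hk
    _ < 1 := hqsum

theorem t_one_pos (hsol : IsSolution l m d n M q t) (hj : j ∈ Icc 1 n) : 0 < t 1 j := by
  obtain ⟨-, dj, hdj, hpos, -⟩ := hsol.2 j hj
  have hdj := mem_Icc.mp hdj
  exact hpos 1 (mem_Icc.mpr ⟨le_rfl, by omega⟩) hdj.1

theorem mul_W_eq_of_pos (hsol : IsSolution l m d n M q t) (hs : s ∈ Icc 1 d) (hj : j ∈ Icc 1 n)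
    (hts : 0 < t s j) : M s * W l m (gam n q t s j) = M 1 * W l m (gam n q t 1 j) := by
  obtain ⟨-, dj, -, -, hzero, heq, -⟩ := hsol.2 j hj
  refine heq s (mem_Icc.mpr ⟨(mem_Icc.mp hs).1, not_lt.mp fun h => ?_⟩)
  exact hts.ne' (hzero s hs h)

theorem mul_W_le (hsol : IsSolution l m d n M q t) (hs : s ∈ Icc 1 d) (hj : j ∈ Icc 1 n) :
    M s * W l m (gam n q t s j) ≤ M 1 * W l m (gam n q t 1 j) := by
  obtain ⟨-, dj, hdj, -, -, heq, hstep⟩ := hsol.2 j hj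
  have hdj := mem_Icc.mp hdj
  rcases le_or_gt s dj with hsdj | hdjs
  · exact (heq s (mem_Icc.mpr ⟨(mem_Icc.mp hs).1, hsdj⟩)).le
  rw [← heq dj (mem_Icc.mpr ⟨hdj.1, le_rfl⟩)]
  have hsd := (mem_Icc.mp hs).2
  replace hdjs := hdjs.le
  clear hs
  induction s, hdjs using Nat.le_induction with
  | base => exact le_rfl
  | succ r hr ih => exact (hstep r hr (by omega)).trans (ih (by omega))

theorem pos_of_pos_succ (hsol : IsSolution l m d n M q t) (hm : 1 ≤ m) (hml : m ≤ l - 1)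
    (hM1 : 0 < M 1) (hq : ∀ j ∈ Icc 1 n, 0 < q j) (hqsum : ∑ j ∈ Icc 1 n, q j < 1)
    (hs : s ∈ Icc 1 d) (hj : j ∈ Icc 1 n) (hj' : j + 1 ∈ Icc 1 n) (hts : 0 < t s (j + 1)) :
    0 < t s j := by
  refine (hsol.1 s hs j hj).lt_of_ne' fun hzero => ?_
  have h1d : 1 ∈ Icc 1 d := left_mem_Icc.mpr ((mem_Icc.mp hs).1.trans (mem_Icc.mp hs).2)
  have hq' : ∀ j ∈ Icc 1 n, 0 ≤ q j := fun j hj => (hq j hj).le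
  have hj1 := (mem_Icc.mp hj).1
  have hjn := (mem_Icc.mp hj').2
  have hgam_s : gam n q t s j = gam n q t s (j + 1) := by
    rw [gam_eq_add n q t s (by omega), hzero, zero_mul, zero_add]
  have hgam_1 : gam n q t 1 (j + 1) < gam n q t 1 j := by
    rw [gam_eq_add n q t 1 (j := j) (by omega)]
    linarith [mul_pos (hsol.t_one_pos hj) (hq j hj)]
  have hW_1 : W l m (gam n q t 1 j) < W l m (gam n q t 1 (j + 1)) :=
    W_strictAntiOn hm hml (Set.Ico_subset_Icc_self (hsol.gam_mem_Ico hq' hqsum h1d (by omega)))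
      (Set.Ico_subset_Icc_self (hsol.gam_mem_Ico hq' hqsum h1d hj1)) hgam_1
  have hle := hsol.mul_W_le hs hj
  rw [hgam_s, hsol.mul_W_eq_of_pos hs hj' hts] at hle
  exact (mul_lt_mul_of_pos_left hW_1 hM1).not_ge hle

end IsSolution

theorem stmt11_general (l m d n : ℕ) (hm : 1 ≤ m) (hml : m ≤ l - 1)
    (M q : ℕ → ℝ)
    (hMpos : ∀ s ∈ Finset.Icc 1 d, 0 < M s)
    (hq : ∀ j ∈ Finset.Icc 1 n, 0 < q j)
    (hqsum : ∑ j ∈ Finset.Icc 1 n, q j < 1)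
    (c v : ℝ) (f : ℕ → ℝ → ℝ)
    (hfm : ∀ j ∈ Finset.Icc 1 n, StrictMono (f j))
    (t : ℕ → ℕ → ℝ) (hsol : IsSolution l m d n M q t)
    (U L : ℕ → ℕ → ℝ)
    (hU1 : ∀ s ∈ Finset.Icc 1 d, U s 1 = v)
    (hrecL : ∀ s ∈ Finset.Icc 1 d, ∀ j ∈ Finset.Icc 1 n,
      (f j (L s j) - c) * W l m (gam n q t s (j + 1)) =
        (f j (U s j) - c) * W l m (gam n q t s j))
    (hrecU : ∀ s ∈ Finset.Icc 1 d, ∀ j ∈ Finset.Icc 1 n, U s (j + 1) = L s j)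
    (j : ℕ) (hj : j ∈ Finset.Icc 1 n)
    (s k : ℕ) (hs : s ∈ Finset.Icc 1 d) (hk : k ∈ Finset.Icc 1 d)
    (hts : 0 < t s j) (htk : 0 < t k j) :
    U s j = U k j := by
  have h1d : 1 ∈ Icc 1 d := left_mem_Icc.mpr ((mem_Icc.mp hs).1.trans (mem_Icc.mp hs).2)
  obtain ⟨hj1, hjn⟩ := mem_Icc.mp hj
  clear hj
  induction j, hj1 using Nat.le_induction generalizing s k with
  | base => rw [hU1 s hs, hU1 k hk]
  | succ j hj1 ih =>
    have hj : j ∈ Icc 1 n := mem_Icc.mpr ⟨hj1, by omega⟩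
    have hj' : j + 1 ∈ Icc 1 n := mem_Icc.mpr ⟨by omega, hjn⟩
    have hpos {r} (hr : r ∈ Icc 1 d) (htr : 0 < t r (j + 1)) : 0 < t r j :=
      hsol.pos_of_pos_succ hm hml (hMpos 1 h1d) hq hqsum hr hj hj' htr
    have hstep {r} (hr : r ∈ Icc 1 d) (htr : 0 < t r (j + 1)) :
        (f j (U r (j + 1)) - c) * (M 1 * W l m (gam n q t 1 (j + 1))) =
          (f j (U r j) - c) * (M 1 * W l m (gam n q t 1 j)) := by
      rw [hrecU r hr j hj, ← hsol.mul_W_eq_of_pos hr hj' htr,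
        ← hsol.mul_W_eq_of_pos hr hj (hpos hr htr)]
      linear_combination M r * hrecL r hr j hj
    have hA : M 1 * W l m (gam n q t 1 (j + 1)) ≠ 0 :=
      (mul_pos (hMpos 1 h1d)
        (W_pos hm hml (hsol.gam_mem_Ico (fun j hj => (hq j hj).le) hqsum h1d (by omega)))).ne'
    have hU : U s j = U k j := ih s k hs hk (hpos hs hts) (hpos hk htk) (by omega)
    have hf := mul_right_cancel₀ hA ((hstep hs hts).trans (hU ▸ (hstep hk htk).symm))
    exact (hfm j hj).injective (sub_left_injective hf)

theorem stmt11 (l m d n : ℕ) (hm : 1 ≤ m) (hml : m ≤ l - 1) (hd : 2 ≤ d) (hn : 1 ≤ n)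
    (M q : ℕ → ℝ)
    (hM : ∀ s ∈ Finset.Icc 1 d, ∀ r ∈ Finset.Icc 1 d, s ≤ r → M r ≤ M s)
    (hMpos : ∀ s ∈ Finset.Icc 1 d, 0 < M s)
    (hq : ∀ j ∈ Finset.Icc 1 n, 0 < q j)
    (hqsum : ∑ j ∈ Finset.Icc 1 n, q j < 1)
    (c v : ℝ) (f : ℕ → ℝ → ℝ)
    (hfc : ∀ j ∈ Finset.Icc 1 n, Continuous (f j))
    (hfm : ∀ j ∈ Finset.Icc 1 n, StrictMono (f j))
    (hfb : ∀ j ∈ Finset.Icc 1 n, Function.Bijective (f j))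
    (hford : ∀ i ∈ Finset.Icc 1 n, ∀ j ∈ Finset.Icc 1 n, i < j → ∀ x : ℝ, f i x < f j x)
    (hfv : c < f 1 v)
    (hassum : ∀ i ∈ Finset.Icc 1 n, ∀ j ∈ Finset.Icc 1 n, i < j →
      ∀ x y : ℝ, y < x → c < f i y →
        (f i y - c) / (f j y - c) < (f i x - c) / (f j x - c))
    (t : ℕ → ℕ → ℝ) (hsol : IsSolution l m d n M q t)
    (U L : ℕ → ℕ → ℝ)
    (hU1 : ∀ s ∈ Finset.Icc 1 d, U s 1 = v)
    (hrecL : ∀ s ∈ Finset.Icc 1 d, ∀ j ∈ Finset.Icc 1 n,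
      (f j (L s j) - c) * W l m (gam n q t s (j + 1)) =
        (f j (U s j) - c) * W l m (gam n q t s j))
    (hrecU : ∀ s ∈ Finset.Icc 1 d, ∀ j ∈ Finset.Icc 1 n, U s (j + 1) = L s j)
    (j : ℕ) (hj : j ∈ Finset.Icc 1 n)
    (s k : ℕ) (hs : s ∈ Finset.Icc 1 d) (hk : k ∈ Finset.Icc 1 d)
    (hts : 0 < t s j) (htk : 0 < t k j) :
    U s j = U k j :=
  stmt11_general l m d n hm hml M q hMpos hq hqsum c v f hfm t hsol U L hU1 hrecL hrecU j hj s k hs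
    hk hts htk
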